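/- arXiv:0912.1628 — 2 statements merged into one kernel-verified Lean document; each statement's English description precedes it below -/
import Mathlib

section
/- Let $A_T$ be an $n \times k$ real matrix with $\lambda_{\min}(A_T^\top A_T) \ge 1 - \delta$ for some $\delta \in [0,1)$, let $\sigma, \sigma_{sys} > 0$, and set $r = \sigma_{sys}^2 / \sigma^2$. Let $M_{prev}$ be a symmetric positive definite $k \times k$ real matrix, let $P = M_{prev}^{-1} \sigma^2 + \sigma_{sys}^2 I_k$, and let $M = A_T^\top A_T + \sigma^2 P^{-1}$. Then $\|M^{-1}\|_2 \le \frac{1}{1 - \delta + \frac{1}{\|M_{prev}^{-1}\|_2 + r}}$. -/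
open Matrix

/-- Spectral norm (induced 2-norm) of a real matrix. -/
noncomputable def spectralNorm2 {m n : ℕ} (A : Matrix (Fin m) (Fin n) ℝ) : ℝ :=
  ‖LinearMap.toContinuousLinearMap (Matrix.toEuclideanLin A)‖

/-- Minimum eigenvalue of a symmetric (Hermitian) real matrix. -/
noncomputable def lambdaMin {k : ℕ} (M : Matrix (Fin k) (Fin k) ℝ) : ℝ :=
  if h : M.IsHermitian then ⨅ i, h.eigenvalues i else 0

/-!
Everything is a Loewner-order estimate. The eigenvalue bound gives `(1 - δ) • 1 ≤ A_Tᵀ A_T`,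
and `σ² P⁻¹ = Q⁻¹` with `Q = M_prev⁻¹ + r • 1 ≤ (‖M_prev⁻¹‖₂ + r) • 1`. Inversion reverses the
order on positive definite matrices, so `Q⁻¹ ≥ (‖M_prev⁻¹‖₂ + r)⁻¹ • 1` and hence `M ≥ c • 1` with
`c = 1 - δ + 1 / (‖M_prev⁻¹‖₂ + r) > 0`. Finally `c ‖M⁻¹ x‖² ≤ ⟪M⁻¹ x, x⟫ ≤ ‖M⁻¹ x‖ ‖x‖`
gives `‖M⁻¹‖₂ ≤ c⁻¹`.
-/

open scoped MatrixOrder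

namespace Matrix

theorem isHermitian_smul_one {ι : Type*} [DecidableEq ι] (c : ℝ) :
    (c • (1 : Matrix ι ι ℝ)).IsHermitian :=
  isHermitian_one.smul (IsSelfAdjoint.all c)

variable {ι : Type*} [Fintype ι]

theorem dotProduct_self_nonneg (v : ι → ℝ) : 0 ≤ v ⬝ᵥ v := by
  simpa using dotProduct_self_star_nonneg v

theorem dotProduct_mulVec_le_of_le {A B : Matrix ι ι ℝ} (h : A ≤ B) (v : ι → ℝ) :
    v ⬝ᵥ (A *ᵥ v) ≤ v ⬝ᵥ (B *ᵥ v) := by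
  have := (le_iff.mp h).dotProduct_mulVec_nonneg v
  rwa [star_trivial, sub_mulVec, dotProduct_sub, sub_nonneg] at this

theorem le_of_dotProduct_mulVec_le {A B : Matrix ι ι ℝ} (hA : A.IsHermitian)
    (hB : B.IsHermitian) (h : ∀ v, v ⬝ᵥ (A *ᵥ v) ≤ v ⬝ᵥ (B *ᵥ v)) : A ≤ B :=
  le_iff.mpr <| .of_dotProduct_mulVec_nonneg (hB.sub hA) fun v => by
    rw [star_trivial, sub_mulVec, dotProduct_sub, sub_nonneg]
    exact h v

theorem dotProduct_smul_one_mulVec [DecidableEq ι] (c : ℝ) (v : ι → ℝ) :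
    v ⬝ᵥ ((c • (1 : Matrix ι ι ℝ)) *ᵥ v) = c * (v ⬝ᵥ v) := by
  rw [smul_mulVec, one_mulVec, dotProduct_smul, smul_eq_mul]

/-- Cauchy–Schwarz for the form of `Q`, applied to `v` and `w = Q⁻¹ v`, gives
`(v ⬝ᵥ v)² ≤ (v ⬝ᵥ Q v) (v ⬝ᵥ Q⁻¹ v)`. -/
theorem PosDef.inv_smul_one_le_inv [DecidableEq ι] {Q : Matrix ι ι ℝ} (hQ : Q.PosDef) {b : ℝ}
    (hb : 0 < b) (hQb : Q ≤ b • 1) : b⁻¹ • 1 ≤ Q⁻¹ := by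
  refine le_of_dotProduct_mulVec_le (isHermitian_smul_one _) hQ.inv.isHermitian fun v => ?_
  set w := Q⁻¹ *ᵥ v
  have hQw : Q *ᵥ w = v := by
    rw [mulVec_mulVec, mul_nonsing_inv _ hQ.det_pos.ne'.isUnit, one_mulVec]
  have hsymm : w ⬝ᵥ (Q *ᵥ v) = v ⬝ᵥ v := by
    rw [dotProduct_mulVec, ← mulVec_transpose, (isHermitian_iff_isSymm.mp hQ.isHermitian).eq,
      hQw]
  have hcs := LinearMap.BilinForm.apply_mul_apply_le_of_forall_zero_le (toBilin' Q)
    (fun x => by simpa [toBilin'_apply'] using hQ.posSemidef.dotProduct_mulVec_nonneg x) v w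
  simp only [toBilin'_apply', hQw, hsymm, dotProduct_comm w v] at hcs
  have hvw : 0 ≤ v ⬝ᵥ w := by
    simpa [hQw, dotProduct_comm] using hQ.posSemidef.dotProduct_mulVec_nonneg w
  have hQv := dotProduct_mulVec_le_of_le hQb v
  rw [dotProduct_smul_one_mulVec] at hQv ⊢
  rw [inv_mul_le_iff₀ hb]
  rcases (dotProduct_self_nonneg v).eq_or_lt with hv0 | hvpos
  · rw [← hv0]
    positivity
  · refine le_of_mul_le_mul_left ?_ hvpos
    calc v ⬝ᵥ v * v ⬝ᵥ v ≤ v ⬝ᵥ (Q *ᵥ v) * v ⬝ᵥ w := hcs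
      _ ≤ b * v ⬝ᵥ v * v ⬝ᵥ w := mul_le_mul_of_nonneg_right hQv hvw
      _ = v ⬝ᵥ v * (b * v ⬝ᵥ w) := by ring

theorem dotProduct_eq_inner_toLp (v w : ι → ℝ) :
    v ⬝ᵥ w = inner ℝ (WithLp.toLp 2 v : EuclideanSpace ℝ ι) (WithLp.toLp 2 w) := by
  rw [EuclideanSpace.inner_toLp_toLp, star_trivial, dotProduct_comm]

theorem dotProduct_self_eq_norm_toLp_sq (v : ι → ℝ) :
    v ⬝ᵥ v = ‖(WithLp.toLp 2 v : EuclideanSpace ℝ ι)‖ ^ 2 := by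
  rw [dotProduct_eq_inner_toLp, real_inner_self_eq_norm_sq]

end Matrix

theorem smul_one_le_of_le_lambdaMin {k : ℕ} {H : Matrix (Fin k) (Fin k) ℝ} (hH : H.IsHermitian)
    {c : ℝ} (hc : c ≤ lambdaMin H) : c • 1 ≤ H := by
  have hev (i : Fin k) : c ≤ hH.eigenvalues i := hc.trans <| by
    rw [lambdaMin, dif_pos hH]
    exact ciInf_le (Set.finite_range _).bddBelow i
  refine le_iff.mpr <| posSemidef_iff_isHermitian_and_spectrum_nonneg.mpr
    ⟨hH.sub (isHermitian_smul_one c), ?_⟩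
  rw [← Algebra.algebraMap_eq_smul_one, ← spectrum.sub_singleton_eq,
    hH.spectrum_real_eq_range_eigenvalues]
  rintro _ ⟨_, ⟨i, rfl⟩, _, rfl, rfl⟩
  exact sub_nonneg.mpr (hev i)

theorem le_spectralNorm2_smul_one {k : ℕ} {B : Matrix (Fin k) (Fin k) ℝ} (hB : B.IsHermitian) :
    B ≤ spectralNorm2 B • 1 := by
  refine le_of_dotProduct_mulVec_le hB (isHermitian_smul_one _) fun v => ?_
  set T := LinearMap.toContinuousLinearMap (toEuclideanLin B)
  set x : EuclideanSpace ℝ (Fin k) := WithLp.toLp 2 v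
  calc v ⬝ᵥ (B *ᵥ v) = inner ℝ x (T x) := dotProduct_eq_inner_toLp _ _
    _ ≤ ‖x‖ * ‖T x‖ := real_inner_le_norm _ _
    _ ≤ ‖x‖ * (‖T‖ * ‖x‖) := by gcongr; exact T.le_opNorm x
    _ = v ⬝ᵥ ((spectralNorm2 B • 1) *ᵥ v) := by
      rw [dotProduct_smul_one_mulVec, dotProduct_self_eq_norm_toLp_sq, spectralNorm2]
      ring

theorem spectralNorm2_inv_le_of_smul_one_le {k : ℕ} {M : Matrix (Fin k) (Fin k) ℝ} {c : ℝ}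
    (hc : 0 < c) (hM : c • 1 ≤ M) : spectralNorm2 M⁻¹ ≤ c⁻¹ := by
  have hcoer (v : Fin k → ℝ) : c * (v ⬝ᵥ v) ≤ v ⬝ᵥ (M *ᵥ v) := by
    simpa only [dotProduct_smul_one_mulVec] using dotProduct_mulVec_le_of_le hM v
  have hMdet : IsUnit M.det := by
    refine isUnit_iff_ne_zero.mpr fun hdet => ?_
    obtain ⟨v, hv, hMv⟩ := exists_mulVec_eq_zero_iff.mpr hdet
    have hvv : v ⬝ᵥ v ≤ 0 := le_of_mul_le_mul_left (by simpa [hMv] using hcoer v) hc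
    exact hv (dotProduct_self_eq_zero.mp (hvv.antisymm (dotProduct_self_nonneg v)))
  refine ContinuousLinearMap.opNorm_le_bound _ (inv_nonneg.mpr hc.le) fun x => ?_
  set y := M⁻¹ *ᵥ WithLp.ofLp x
  set Y : EuclideanSpace ℝ (Fin k) := WithLp.toLp 2 y
  have hMy : M *ᵥ y = WithLp.ofLp x := by
    rw [mulVec_mulVec, mul_nonsing_inv _ hMdet, one_mulVec]
  have hY : c * ‖Y‖ ^ 2 ≤ ‖Y‖ * ‖x‖ :=
    calc c * ‖Y‖ ^ 2 = c * (y ⬝ᵥ y) := by rw [dotProduct_self_eq_norm_toLp_sq]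
      _ ≤ y ⬝ᵥ (M *ᵥ y) := hcoer y
      _ = inner ℝ Y x := by rw [hMy, dotProduct_eq_inner_toLp]
      _ ≤ ‖Y‖ * ‖x‖ := real_inner_le_norm _ _
  change ‖Y‖ ≤ c⁻¹ * ‖x‖
  rw [le_inv_mul_iff₀ hc]
  rcases (norm_nonneg Y).eq_or_lt with hY0 | hYpos
  · rw [← hY0, mul_zero]
    exact norm_nonneg x
  · exact le_of_mul_le_mul_left (by linarith) hYpos

theorem Minv_recursive_bound_general {n k : ℕ}
    (A_T : Matrix (Fin n) (Fin k) ℝ) (δ : ℝ) (hδ1 : δ < 1)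
    (hmin : 1 - δ ≤ lambdaMin (A_Tᵀ * A_T))
    (σ σsys : ℝ) (hσ : 0 < σ) (hσsys : 0 < σsys)
    (r : ℝ) (hr : r = σsys ^ 2 / σ ^ 2)
    (Mprev : Matrix (Fin k) (Fin k) ℝ) (hMprev : Mprev.PosDef)
    (P : Matrix (Fin k) (Fin k) ℝ)
    (hP : P = σ ^ 2 • Mprev⁻¹ + σsys ^ 2 • (1 : Matrix (Fin k) (Fin k) ℝ))
    (M : Matrix (Fin k) (Fin k) ℝ) (hM : M = A_Tᵀ * A_T + σ ^ 2 • P⁻¹) :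
    spectralNorm2 M⁻¹ ≤ 1 / (1 - δ + 1 / (spectralNorm2 Mprev⁻¹ + r)) := by
  set Q := Mprev⁻¹ + r • (1 : Matrix (Fin k) (Fin k) ℝ)
  have hr0 : 0 < r := by rw [hr]; positivity
  have hb : 0 < spectralNorm2 Mprev⁻¹ + r := add_pos_of_nonneg_of_pos (norm_nonneg _) hr0
  have hQ : Q.PosDef := hMprev.inv.add (PosDef.one.smul hr0)
  have hσ2 : σ ^ 2 ≠ 0 := by positivity
  have hPQ : P = σ ^ 2 • Q := by rw [hP, smul_add, smul_smul, hr, mul_div_cancel₀ _ hσ2]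
  have hPinv : σ ^ 2 • P⁻¹ = Q⁻¹ := by
    letI := invertibleOfNonzero hσ2
    rw [hPQ, inv_smul Q (σ ^ 2) hQ.det_pos.ne'.isUnit, smul_smul, mul_invOf_self, one_smul]
  have hQb : Q ≤ (spectralNorm2 Mprev⁻¹ + r) • 1 := by
    rw [add_smul]
    exact add_le_add_left (le_spectralNorm2_smul_one hMprev.inv.isHermitian) _
  have hA : (A_Tᵀ * A_T).IsHermitian := by
    simpa using isHermitian_conjTranspose_mul_self A_T
  have hMc : (1 - δ + 1 / (spectralNorm2 Mprev⁻¹ + r)) • 1 ≤ M := by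
    rw [hM, hPinv, add_smul, one_div]
    exact add_le_add (smul_one_le_of_le_lambdaMin hA hmin) (hQ.inv_smul_one_le_inv hb hQb)
  have hc : 0 < 1 - δ + 1 / (spectralNorm2 Mprev⁻¹ + r) := by
    have := sub_pos.mpr hδ1
    positivity
  rw [one_div]
  exact spectralNorm2_inv_le_of_smul_one_le hc hMc

/-- recursive bound on `‖M_t⁻¹‖₂` when the support estimate does not
change, i.e. `P = M_prev⁻¹ σ² + σ_sys² I` and `M = A_Tᵀ A_T + σ² P⁻¹`:
`‖M⁻¹‖₂ ≤ 1 / (1 - δ + 1/(‖M_prev⁻¹‖₂ + r))` with `r = σ_sys²/σ²`. -/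
theorem Minv_recursive_bound {n k : ℕ}
    (A_T : Matrix (Fin n) (Fin k) ℝ) (δ : ℝ) (hδ0 : 0 ≤ δ) (hδ1 : δ < 1)
    (hmin : 1 - δ ≤ lambdaMin (A_Tᵀ * A_T))
    (σ σsys : ℝ) (hσ : 0 < σ) (hσsys : 0 < σsys)
    (r : ℝ) (hr : r = σsys ^ 2 / σ ^ 2)
    (Mprev : Matrix (Fin k) (Fin k) ℝ) (hMprev : Mprev.PosDef)
    (P : Matrix (Fin k) (Fin k) ℝ)
    (hP : P = σ ^ 2 • Mprev⁻¹ + σsys ^ 2 • (1 : Matrix (Fin k) (Fin k) ℝ))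
    (M : Matrix (Fin k) (Fin k) ℝ) (hM : M = A_Tᵀ * A_T + σ ^ 2 • P⁻¹) :
    spectralNorm2 M⁻¹ ≤ 1 / (1 - δ + 1 / (spectralNorm2 Mprev⁻¹ + r)) :=
  Minv_recursive_bound_general A_T δ hδ1 hmin σ σsys hσ hσsys r hr Mprev hMprev P hP M hM
end

section
/- (Core of the KF-CS convergence lemma.) Let $(\Omega, \mathcal{F}, \Pr)$ be a probability space and fix positive integers $k, n$ and an integer $t_*$. Let $J_t, \tilde{J}_t$ (for $t > t_*$) be deterministic $k \times k$ real matrices and $K_t, \tilde{K}_t$ deterministic $k \times n$ real matrices such that, as $t \to \infty$: $J_t \to J_*$, $\tilde{J}_t \to J_*$, $K_t \to K_*$, and $\tilde{K}_t \to K_*$, where the spectral radius of $J_*$ (the maximum modulus of its complex eigenvalues) is strictly less than $1$. Let $\tilde{e}_t, \nu_t$ be random vectors in $\mathbb{R}^k$ and $w_t$ random vectors in $\mathbb{R}^n$ with uniformly bounded second moments: $\sup_t \mathbb{E}[\|\tilde{e}_t\|_2^2] < \infty$, $\sup_t \mathbb{E}[\|\nu_t\|_2^2] < \infty$, $\sup_t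 \mathbb{E}[\|w_t\|_2^2] < \infty$. Let $d_t$ be random vectors in $\mathbb{R}^k$ with $\mathbb{E}[\|d_{t_*}\|_2^2] < \infty$ satisfying, almost surely for all $t > t_*$, $d_t = J_t d_{t-1} + (J_t - \tilde{J}_t)(\tilde{e}_{t-1} + \nu_t) + (\tilde{K}_t - K_t) w_t$. Then $d_t$ converges to zero in mean square: $\mathbb{E}[\|d_t\|_2^2] \to 0$ as $t \to \infty$; consequently, by Markov's inequality, $d_t \to 0$ in probability, i.e., for every $\epsilon, \epsilon_{err} > 0$ there exists $\tau$ such that $\Pr(\|d_t\|_2^2 \le \epsilon_{err}) > 1 - \epsilon$ for all $t \ge t_* + \tau$. -/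
/-!
Since the spectral radius of `J_*` is below `1`, `‖J_*^N‖ ≤ ρ^N` for some `N ≥ 1` and `ρ < 1`,
and `x ↦ ∑_{i<N} ‖J_*^i x‖ / ρ^i` is a norm, equivalent to the given one, in which `J_*`
contracts by `ρ`. In this norm `J_t` contracts by `(1 + ρ) / 2` for large `t`. Lifting the
recursion to `L²(Ω)`, where the matrices act pointwise, the adapted norm of `d_t` satisfies
`y_t ≤ (1 + ρ) / 2 * y_{t-1} + c_t`, where `c_t → 0` because the forcing terms are bounded in `L²`
and multiplied by `J_t - J̃_t → 0` and `K̃_t - K_t → 0`. Hence `y_t → 0`, and Markov's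
inequality turns mean-square convergence into convergence in probability.
-/

open Matrix MeasureTheory Filter

/-- Matrix–vector multiplication, with the result regarded as an element of
Euclidean space (so that `‖·‖` is the Euclidean norm). -/
def mulVecE {m n : ℕ} (A : Matrix (Fin m) (Fin n) ℝ) (v : EuclideanSpace ℝ (Fin n)) :
    EuclideanSpace ℝ (Fin m) :=
  WithLp.toLp 2 (A.mulVec v)

open Topology

theorem le_pow_mul_add_of_le_mul_add {x c : ℤ → ℝ} {ρ ε : ℝ} {T : ℤ} (hρ : 0 ≤ ρ) (hε : 0 ≤ ε)
    (hrec : ∀ t, T < t → x t ≤ ρ * x (t - 1) + c t) (hc : ∀ t, T < t → c t ≤ (1 - ρ) * ε) :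
    ∀ m : ℕ, x (T + m) ≤ ρ ^ m * x T + ε
  | 0 => by simpa using hε
  | m + 1 => by
    have hT : T < T + (m + 1 : ℕ) := by omega
    calc x (T + (m + 1 : ℕ)) ≤ ρ * x (T + m) + c (T + (m + 1 : ℕ)) := by
          simpa [← add_assoc] using hrec _ hT
      _ ≤ ρ * (ρ ^ m * x T + ε) + (1 - ρ) * ε := by
          gcongr
          exacts [le_pow_mul_add_of_le_mul_add hρ hε hrec hc m, hc _ hT]
      _ = ρ ^ (m + 1) * x T + ε := by ring

theorem tendsto_zero_of_le_mul_add {x c : ℤ → ℝ} {ρ : ℝ} (hρ0 : 0 ≤ ρ) (hρ1 : ρ < 1)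
    (hx : ∀ t, 0 ≤ x t) (hrec : ∀ᶠ t in atTop, x t ≤ ρ * x (t - 1) + c t)
    (hc : Tendsto c atTop (𝓝 0)) : Tendsto x atTop (𝓝 0) := by
  refine tendsto_order.2 ⟨fun a ha => .of_forall fun t => ha.trans_le (hx t), fun a ha => ?_⟩
  have hε : 0 < a / 2 := half_pos ha
  obtain ⟨T, hT⟩ := eventually_atTop.1
    (hrec.and (hc.eventually_lt_const (mul_pos (sub_pos.2 hρ1) hε)))
  have hiter := le_pow_mul_add_of_le_mul_add hρ0 hε.le (fun t ht => (hT t ht.le).1)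
    (fun t ht => (hT t ht.le).2.le)
  have hgeom : Tendsto (fun m : ℕ => ρ ^ m * x T) atTop (𝓝 0) := by
    simpa using (tendsto_pow_atTop_nhds_zero_of_lt_one hρ0 hρ1).mul_const (x T)
  obtain ⟨M, hM⟩ := eventually_atTop.1 (hgeom.eventually_lt_const hε)
  refine eventually_atTop.2 ⟨T + M, fun t ht => ?_⟩
  obtain ⟨m, rfl⟩ : ∃ m : ℕ, t = T + m := ⟨(t - T).toNat, by omega⟩
  calc x (T + m) ≤ ρ ^ m * x T + a / 2 := hiter m
    _ < a / 2 + a / 2 := by gcongr; exact hM m (by omega)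
    _ = a := add_halves a

theorem exists_norm_pow_le_pow_of_tendsto_pow {R : Type*} [SeminormedRing R] {a : R}
    (ha : Tendsto (a ^ ·) atTop (𝓝 0)) :
    ∃ (N : ℕ) (ρ : ℝ), 0 < N ∧ 0 < ρ ∧ ρ < 1 ∧ ‖a ^ N‖ ≤ ρ ^ N := by
  obtain ⟨N, hN, hN1⟩ := ((tendsto_zero_iff_norm_tendsto_zero.1 ha).eventually_lt_const
    zero_lt_one |>.and (eventually_ge_atTop 1)).exists
  have hq : 0 < (1 + ‖a ^ N‖) / 2 := by positivity
  refine ⟨N, ((1 + ‖a ^ N‖) / 2) ^ ((N : ℝ)⁻¹), hN1, Real.rpow_pos_of_pos hq _,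
    Real.rpow_lt_one hq.le (by linarith) (by positivity), ?_⟩
  rw [Real.rpow_inv_natCast_pow hq.le (by omega)]
  linarith

theorem tendsto_pow_nhds_zero_of_spectralRadius_lt_one {R : Type*} [NormedRing R]
    [NormedAlgebra ℂ R] [CompleteSpace R] {a : R} (ha : spectralRadius ℂ a < 1) :
    Tendsto (a ^ ·) atTop (𝓝 0) := by
  obtain ⟨c, hc0, hac, hc1⟩ := ENNReal.lt_iff_exists_real_btwn.1 ha
  have hev : ∀ᶠ n : ℕ in atTop, ‖a ^ n‖ ≤ c ^ n := by
    filter_upwards [(spectrum.pow_norm_pow_one_div_tendsto_nhds_spectralRadius a)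
      |>.eventually_lt_const hac, eventually_ge_atTop 1] with n hn hn1
    calc ‖a ^ n‖ = (‖a ^ n‖ ^ (1 / n : ℝ)) ^ n := by
          rw [one_div, Real.rpow_inv_natCast_pow (norm_nonneg _) (by omega)]
      _ ≤ c ^ n := by gcongr; exact (ENNReal.ofReal_lt_ofReal_iff'.1 hn).1.le
  exact squeeze_zero_norm' hev
    (tendsto_pow_atTop_nhds_zero_of_lt_one hc0 (ENNReal.ofReal_lt_one.1 hc1))

section Spectral

/- Gelfand's formula needs a submultiplicative norm; the `L∞` operator norm induces the product
topology, so the conclusion below is about the default topology on matrices. -/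
attribute [local instance] Matrix.linftyOpNormedRing Matrix.linftyOpNormedAlgebra

theorem Matrix.tendsto_pow_of_spectralRadius_map_ofReal_lt_one {n : Type*} [Fintype n]
    [DecidableEq n] {A : Matrix n n ℝ}
    (hA : spectralRadius ℂ (A.map (Complex.ofReal : ℝ → ℂ)) < 1) :
    Tendsto (A ^ ·) atTop (𝓝 0) := by
  have : CompleteSpace (Matrix n n ℂ) := FiniteDimensional.complete ℂ _
  have hre : Continuous fun M : Matrix n n ℂ => M.map Complex.re :=
    continuous_id.matrix_map Complex.continuous_re
  have h := (hre.tendsto 0).comp (tendsto_pow_nhds_zero_of_spectralRadius_lt_one hA)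
  have hA' : A.map (Complex.ofReal : ℝ → ℂ) = A.map Complex.ofRealHom := rfl
  simpa [Function.comp_def, hA', ← Matrix.map_pow, Matrix.map_map] using h

end Spectral

section AdaptedNorm

variable {𝕜 V : Type*} [NontriviallyNormedField 𝕜] [NormedAddCommGroup V] [NormedSpace 𝕜 V]

noncomputable def adaptedNorm (A : V →L[𝕜] V) (ρ : ℝ) (N : ℕ) (x : V) : ℝ :=
  ∑ i ∈ Finset.range N, ‖(A ^ i) x‖ / ρ ^ i

variable {A : V →L[𝕜] V} {ρ : ℝ} {N : ℕ}

theorem adaptedNorm_nonneg (hρ : 0 ≤ ρ) (x : V) : 0 ≤ adaptedNorm A ρ N x :=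
  Finset.sum_nonneg fun _ _ => by positivity

theorem norm_le_adaptedNorm (hρ : 0 ≤ ρ) (hN : 0 < N) (x : V) : ‖x‖ ≤ adaptedNorm A ρ N x := by
  refine le_of_eq_of_le ?_ (Finset.single_le_sum (f := fun i => ‖(A ^ i) x‖ / ρ ^ i)
    (fun _ _ => by positivity) (Finset.mem_range.2 hN))
  rw [pow_zero, pow_zero, div_one, one_apply_eq_self]

theorem adaptedNorm_add_le (hρ : 0 ≤ ρ) (x y : V) :
    adaptedNorm A ρ N (x + y) ≤ adaptedNorm A ρ N x + adaptedNorm A ρ N y := by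
  rw [adaptedNorm, adaptedNorm, adaptedNorm, ← Finset.sum_add_distrib]
  refine Finset.sum_le_sum fun i _ => ?_
  rw [map_add, ← add_div]
  gcongr
  exact norm_add_le _ _

theorem adaptedNorm_le (hρ : 0 ≤ ρ) (x : V) :
    adaptedNorm A ρ N x ≤ (∑ i ∈ Finset.range N, ‖A ^ i‖ / ρ ^ i) * ‖x‖ := by
  rw [adaptedNorm, Finset.sum_mul]
  refine Finset.sum_le_sum fun i _ => ?_
  rw [div_mul_eq_mul_div]
  gcongr
  exact (A ^ i).le_opNorm x

theorem adaptedNorm_apply_le (hρ : 0 < ρ) (hA : ‖A ^ N‖ ≤ ρ ^ N) (x : V) :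
    adaptedNorm A ρ N (A x) ≤ ρ * adaptedNorm A ρ N x := by
  set g : ℕ → ℝ := fun i => ‖(A ^ i) x‖ / ρ ^ i
  have hshift : adaptedNorm A ρ N (A x) = ρ * ∑ i ∈ Finset.range N, g (i + 1) := by
    rw [adaptedNorm, Finset.mul_sum]
    refine Finset.sum_congr rfl fun i _ => ?_
    have hAx : (A ^ (i + 1)) x = (A ^ i) (A x) := by rw [pow_succ]; rfl
    simp only [g, hAx, pow_succ ρ]
    field_simp
  -- applying `A` shifts the sum, trading the term `‖x‖` for `‖A ^ N x‖ / ρ ^ N ≤ ‖x‖`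
  have hgN : g N ≤ g 0 := calc
    g N ≤ ‖A ^ N‖ * ‖x‖ / ρ ^ N := by simp only [g]; gcongr; exact (A ^ N).le_opNorm x
    _ ≤ ρ ^ N * ‖x‖ / ρ ^ N := by gcongr
    _ = g 0 := by simp [g, hρ.ne']
  have hF : adaptedNorm A ρ N x = ∑ i ∈ Finset.range N, g i := rfl
  rw [hshift, hF]
  refine mul_le_mul_of_nonneg_left ?_ hρ.le
  linarith [Finset.sum_range_succ g N, Finset.sum_range_succ' g N]

theorem adaptedNorm_apply_le_of_sub (hρ : 0 < ρ) (hN : 0 < N) (hA : ‖A ^ N‖ ≤ ρ ^ N)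
    (B : V →L[𝕜] V) (x : V) :
    adaptedNorm A ρ N (B x) ≤
      (ρ + (∑ i ∈ Finset.range N, ‖A ^ i‖ / ρ ^ i) * ‖B - A‖) * adaptedNorm A ρ N x := by
  set C := ∑ i ∈ Finset.range N, ‖A ^ i‖ / ρ ^ i
  have hC : 0 ≤ C := Finset.sum_nonneg fun _ _ => by positivity
  calc adaptedNorm A ρ N (B x) = adaptedNorm A ρ N (A x + (B - A) x) := by
        rw [_root_.sub_apply, add_sub_cancel]
    _ ≤ adaptedNorm A ρ N (A x) + adaptedNorm A ρ N ((B - A) x) := adaptedNorm_add_le hρ.le _ _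
    _ ≤ ρ * adaptedNorm A ρ N x + C * (‖B - A‖ * adaptedNorm A ρ N x) := by
        gcongr
        · exact adaptedNorm_apply_le hρ hA x
        · refine (adaptedNorm_le hρ.le _).trans ?_
          gcongr
          exact ((B - A).le_opNorm x).trans (by gcongr; exact norm_le_adaptedNorm hρ.le hN x)
    _ = _ := by ring

theorem tendsto_zero_of_perturbed_stable_recursion {B : ℤ → V →L[𝕜] V} {x u : ℤ → V}
    (hA : Tendsto (A ^ ·) atTop (𝓝 0)) (hB : Tendsto B atTop (𝓝 A))
    (hu : Tendsto u atTop (𝓝 0)) (hx : ∀ᶠ t in atTop, x t = B t (x (t - 1)) + u t) :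
    Tendsto x atTop (𝓝 0) := by
  obtain ⟨N, ρ, hN, hρ0, hρ1, hAN⟩ := exists_norm_pow_le_pow_of_tendsto_pow hA
  set C := ∑ i ∈ Finset.range N, ‖A ^ i‖ / ρ ^ i
  have hsmall : ∀ᶠ t in atTop, C * ‖B t - A‖ < (1 - ρ) / 2 := by
    have h : Tendsto (fun t => C * ‖B t - A‖) atTop (𝓝 0) := by
      simpa using (tendsto_iff_norm_sub_tendsto_zero.1 hB).const_mul C
    exact h.eventually_lt_const (by linarith)
  have hrec : ∀ᶠ t in atTop, adaptedNorm A ρ N (x t) ≤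
      (1 + ρ) / 2 * adaptedNorm A ρ N (x (t - 1)) + C * ‖u t‖ := by
    filter_upwards [hx, hsmall] with t hxt hBt
    have hF := adaptedNorm_nonneg (A := A) (N := N) hρ0.le (x (t - 1))
    calc adaptedNorm A ρ N (x t)
        ≤ adaptedNorm A ρ N (B t (x (t - 1))) + adaptedNorm A ρ N (u t) := by
          rw [hxt]; exact adaptedNorm_add_le hρ0.le _ _
      _ ≤ (ρ + C * ‖B t - A‖) * adaptedNorm A ρ N (x (t - 1)) + C * ‖u t‖ :=
          add_le_add (adaptedNorm_apply_le_of_sub hρ0 hN hAN _ _) (adaptedNorm_le hρ0.le _)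
      _ ≤ _ := by gcongr; linarith
  have hF : Tendsto (fun t => adaptedNorm A ρ N (x t)) atTop (𝓝 0) :=
    tendsto_zero_of_le_mul_add (by positivity) (by linarith)
      (fun t => adaptedNorm_nonneg hρ0.le _) hrec (by simpa using hu.norm.const_mul C)
  exact squeeze_zero_norm (fun t => norm_le_adaptedNorm hρ0.le hN _) hF

end AdaptedNorm

section Lp

variable {Ω E : Type*} [MeasurableSpace Ω] {μ : Measure Ω} [NormedAddCommGroup E]

theorem ContinuousLinearMap.compLpL_pow {𝕜 : Type*} [NontriviallyNormedField 𝕜]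
    [NormedSpace 𝕜 E] {p : ENNReal} [Fact (1 ≤ p)] (L : E →L[𝕜] E) (m : ℕ) :
    (L ^ m).compLpL p μ = L.compLpL p μ ^ m := by
  induction m with
  | zero =>
    ext1 f
    refine Lp.ext ?_
    filter_upwards [(L ^ 0).coeFn_compLpL f] with ω h
    simpa using h
  | succ m ih =>
    ext1 f
    refine Lp.ext ?_
    filter_upwards [(L ^ (m + 1)).coeFn_compLpL f,
      (L ^ m).coeFn_compLpL (L.compLpL p μ f), L.coeFn_compLpL f] with ω h1 h2 h3
    rw [pow_succ (L.compLpL p μ), ← ih, mul_apply_eq_comp, h1, h2, h3, pow_succ,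
      mul_apply_eq_comp]

theorem MeasureTheory.MemLp.norm_toLp_sq [InnerProductSpace ℝ E] {f : Ω → E} (hf : MemLp f 2 μ) :
    ‖hf.toLp f‖ ^ 2 = ∫ ω, ‖f ω‖ ^ 2 ∂μ := by
  rw [← real_inner_self_eq_norm_sq, L2.inner_def]
  refine integral_congr_ae ?_
  filter_upwards [hf.coeFn_toLp] with ω h
  rw [h, real_inner_self_eq_norm_sq]

theorem integral_norm_sq_add_le {f g : Ω → E} (hf : MemLp f 2 μ) (hg : MemLp g 2 μ) :
    ∫ ω, ‖f ω + g ω‖ ^ 2 ∂μ ≤ 2 * (∫ ω, ‖f ω‖ ^ 2 ∂μ + ∫ ω, ‖g ω‖ ^ 2 ∂μ) := by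
  have hfi := hf.integrable_norm_pow (p := 2) two_ne_zero
  have hgi := hg.integrable_norm_pow (p := 2) two_ne_zero
  rw [← integral_add hfi hgi, ← integral_const_mul]
  refine integral_mono ((hf.add hg).integrable_norm_pow (p := 2) two_ne_zero)
    ((hfi.add hgi).const_mul 2) fun ω => ?_
  have := norm_add_le (f ω) (g ω)
  nlinarith [norm_nonneg (f ω + g ω), sq_nonneg (‖f ω‖ - ‖g ω‖)]

variable {ι : Type*} {l : Filter ι}

theorem tendsto_integral_norm_sq_add {f g : ι → Ω → E} (hf : ∀ i, MemLp (f i) 2 μ)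
    (hg : ∀ i, MemLp (g i) 2 μ) (hf0 : Tendsto (fun i => ∫ ω, ‖f i ω‖ ^ 2 ∂μ) l (𝓝 0))
    (hg0 : Tendsto (fun i => ∫ ω, ‖g i ω‖ ^ 2 ∂μ) l (𝓝 0)) :
    Tendsto (fun i => ∫ ω, ‖f i ω + g i ω‖ ^ 2 ∂μ) l (𝓝 0) :=
  squeeze_zero (fun _ => integral_nonneg fun _ => by positivity)
    (fun i => integral_norm_sq_add_le (hf i) (hg i)) (by simpa using (hf0.add hg0).const_mul 2)

theorem tendsto_integral_norm_sq_apply {F : Type*} [NormedAddCommGroup F] [NormedSpace ℝ E]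
    [NormedSpace ℝ F] {L : ι → E →L[ℝ] F} {X : ι → Ω → E} {C : ℝ} (hL : Tendsto L l (𝓝 0))
    (hX : ∀ i, MemLp (X i) 2 μ) (hC : ∀ i, ∫ ω, ‖X i ω‖ ^ 2 ∂μ ≤ C) :
    Tendsto (fun i => ∫ ω, ‖L i (X i ω)‖ ^ 2 ∂μ) l (𝓝 0) := by
  have hle : ∀ i, ∫ ω, ‖L i (X i ω)‖ ^ 2 ∂μ ≤ ‖L i‖ ^ 2 * C := fun i => calc
    _ ≤ ∫ ω, ‖L i‖ ^ 2 * ‖X i ω‖ ^ 2 ∂μ :=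
        integral_mono_of_nonneg (.of_forall fun _ => by positivity)
          (((hX i).integrable_norm_pow (p := 2) two_ne_zero).const_mul _)
          (.of_forall fun ω => by dsimp only; rw [← mul_pow]; gcongr; exact (L i).le_opNorm _)
    _ ≤ _ := by rw [integral_const_mul]; gcongr; exact hC i
  refine squeeze_zero (fun _ => integral_nonneg fun _ => by positivity) hle ?_
  simpa using (hL.norm.pow 2).mul_const C

theorem eventually_one_sub_lt_measure_le_of_tendsto_integral [IsProbabilityMeasure μ]
    {g : ι → Ω → ℝ} (hg0 : ∀ i ω, 0 ≤ g i ω) (hg : ∀ᶠ i in l, Integrable (g i) μ)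
    (h : Tendsto (fun i => ∫ ω, g i ω ∂μ) l (𝓝 0)) {ε δ : ℝ} (hε : 0 < ε) (hδ : 0 < δ) :
    ∀ᶠ i in l, 1 - δ < (μ {ω | g i ω ≤ ε}).toReal := by
  filter_upwards [hg, h.eventually_lt_const (mul_pos hε hδ)] with i hgi hi
  have hmarkov : ε * μ.real {ω | ε ≤ g i ω} ≤ ∫ ω, g i ω ∂μ :=
    mul_meas_ge_le_integral_of_nonneg (.of_forall (hg0 i)) hgi ε
  have hcover : 1 ≤ μ.real {ω | g i ω ≤ ε} + μ.real {ω | ε ≤ g i ω} := calc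
    1 = μ.real Set.univ := probReal_univ.symm
    _ ≤ μ.real ({ω | g i ω ≤ ε} ∪ {ω | ε ≤ g i ω}) :=
        measureReal_mono fun ω _ => le_total (g i ω) ε
    _ ≤ _ := measureReal_union_le _ _
  have hbad : μ.real {ω | ε ≤ g i ω} < δ := (mul_lt_mul_iff_right₀ hε).1 (hmarkov.trans_lt hi)
  show 1 - δ < μ.real _
  linarith

theorem memLp_of_ae_recursion {𝕜 : Type*} [NontriviallyNormedField 𝕜] [NormedSpace 𝕜 E]
    {p : ENNReal} {B : ℤ → E →L[𝕜] E} {f g : ℤ → Ω → E} {t₀ : ℤ} (hf : MemLp (f t₀) p μ)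
    (hg : ∀ t, MemLp (g t) p μ)
    (hrec : ∀ᵐ ω ∂μ, ∀ t, t₀ < t → f t ω = B t (f (t - 1) ω) + g t ω) :
    ∀ t, t₀ ≤ t → MemLp (f t) p μ := by
  refine Int.leInduction hf fun t ht hft => ?_
  have hft' : MemLp (f (t + 1 - 1)) p μ := by rwa [add_sub_cancel_right]
  refine (((B (t + 1)).comp_memLp' hft').add (hg (t + 1))).ae_eq ?_
  filter_upwards [hrec] with ω hω
  exact (hω (t + 1) (by omega)).symm

theorem tendsto_integral_norm_sq_of_ae_recursion [InnerProductSpace ℝ E] {A : E →L[ℝ] E}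
    {B : ℤ → E →L[ℝ] E} {f g : ℤ → Ω → E} {t₀ : ℤ}
    (hA : Tendsto (A ^ ·) atTop (𝓝 0)) (hB : Tendsto B atTop (𝓝 A))
    (hf : ∀ t, t₀ ≤ t → MemLp (f t) 2 μ) (hg : ∀ t, MemLp (g t) 2 μ)
    (hg0 : Tendsto (fun t => ∫ ω, ‖g t ω‖ ^ 2 ∂μ) atTop (𝓝 0))
    (hrec : ∀ᵐ ω ∂μ, ∀ t, t₀ < t → f t ω = B t (f (t - 1) ω) + g t ω) :
    Tendsto (fun t => ∫ ω, ‖f t ω‖ ^ 2 ∂μ) atTop (𝓝 0) := by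
  -- `f t` is only known to be in `L²` for `t ≥ t₀`
  set X : ℤ → Lp E 2 μ := fun t => (hf (max t₀ t) (le_max_left _ _)).toLp _
  set G : ℤ → Lp E 2 μ := fun t => (hg t).toLp _
  have hG : Tendsto G atTop (𝓝 0) := by
    refine tendsto_zero_iff_norm_tendsto_zero.2 ?_
    have hGn : ∀ t, ‖G t‖ = √(∫ ω, ‖g t ω‖ ^ 2 ∂μ) := fun t => by
      rw [← (hg t).norm_toLp_sq, Real.sqrt_sq (norm_nonneg _)]
    simpa [hGn] using hg0.sqrt
  have hXrec : ∀ᶠ t in atTop, X t = (B t).compLpL 2 μ (X (t - 1)) + G t := by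
    filter_upwards [eventually_gt_atTop t₀] with t ht
    refine Lp.ext ?_
    filter_upwards [MemLp.coeFn_toLp (hf (max t₀ t) (le_max_left _ _)),
      Lp.coeFn_add ((B t).compLpL 2 μ (X (t - 1))) (G t), (B t).coeFn_compLpL (X (t - 1)),
      MemLp.coeFn_toLp (hf (max t₀ (t - 1)) (le_max_left _ _)), (hg t).coeFn_toLp, hrec]
      with ω h1 h2 h3 h4 h5 h6
    simp only [X, G] at h2 h3 ⊢
    rw [h1, h2, Pi.add_apply, h3, h4, h5, max_eq_right ht.le, max_eq_right (by omega), h6 t ht]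
  have hX : Tendsto X atTop (𝓝 0) := by
    refine tendsto_zero_of_perturbed_stable_recursion (A := A.compLpL 2 μ) ?_ ?_ hG hXrec
    · refine squeeze_zero_norm (fun m => ?_) (tendsto_zero_iff_norm_tendsto_zero.1 hA)
      rw [← ContinuousLinearMap.compLpL_pow]
      exact ContinuousLinearMap.norm_compLpL_le _
    · exact ((ContinuousLinearMap.compLpL₂ 2 μ
        (ContinuousLinearMap.id ℝ (E →L[ℝ] E))).continuous.tendsto A).comp hB
  refine (by simpa using hX.norm.pow 2 : Tendsto (fun t => ‖X t‖ ^ 2) atTop (𝓝 0)).congr' ?_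
  filter_upwards [eventually_ge_atTop t₀] with t ht
  rw [MemLp.norm_toLp_sq, max_eq_right ht]

end Lp

/-- On square matrices this is definitionally `Matrix.toEuclideanCLM`. -/
noncomputable def mulVecCLM {m n : ℕ} :
    Matrix (Fin m) (Fin n) ℝ →L[ℝ] EuclideanSpace ℝ (Fin n) →L[ℝ] EuclideanSpace ℝ (Fin m) :=
  LinearMap.toContinuousLinearMap (toEuclideanLin.trans LinearMap.toContinuousLinearMap).toLinearMap

@[simp]
theorem mulVecCLM_apply {m n : ℕ} (A : Matrix (Fin m) (Fin n) ℝ) (x : EuclideanSpace ℝ (Fin n)) :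
    mulVecCLM A x = mulVecE A x :=
  rfl

theorem mulVecCLM_pow {m : ℕ} (A : Matrix (Fin m) (Fin m) ℝ) (j : ℕ) :
    mulVecCLM (A ^ j) = mulVecCLM A ^ j :=
  map_pow (toEuclideanCLM (n := Fin m) (𝕜 := ℝ)) A j

theorem tendsto_pow_mulVecCLM_of_spectralRadius_lt_one {m : ℕ} {A : Matrix (Fin m) (Fin m) ℝ}
    (hA : spectralRadius ℂ (A.map (Complex.ofReal : ℝ → ℂ)) < 1) :
    Tendsto (mulVecCLM A ^ ·) atTop (𝓝 0) := by
  simpa [Function.comp_def, ← mulVecCLM_pow] using (mulVecCLM.continuous.tendsto 0).comp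
    (Matrix.tendsto_pow_of_spectralRadius_map_ofReal_lt_one hA)

theorem tendsto_mulVecCLM_sub {ι : Type*} {l : Filter ι} {m n : ℕ}
    {M M' : ι → Matrix (Fin m) (Fin n) ℝ} {A : Matrix (Fin m) (Fin n) ℝ}
    (hM : Tendsto M l (𝓝 A)) (hM' : Tendsto M' l (𝓝 A)) :
    Tendsto (fun i => mulVecCLM (M i - M' i)) l (𝓝 0) := by
  have h := (mulVecCLM.continuous.tendsto (A - A)).comp (hM.sub hM')
  rwa [sub_self, map_zero] at h

theorem kfcs_converges_to_genie_kf_general {Ω : Type*} [MeasurableSpace Ω]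
    (P : Measure Ω) [IsProbabilityMeasure P]
    (k n : ℕ) (tstar : ℤ)
    (J Jtil : ℤ → Matrix (Fin k) (Fin k) ℝ)
    (K Ktil : ℤ → Matrix (Fin k) (Fin n) ℝ)
    (Jstar : Matrix (Fin k) (Fin k) ℝ) (Kstar : Matrix (Fin k) (Fin n) ℝ)
    (hJconv : Tendsto J atTop (nhds Jstar))
    (hJtilconv : Tendsto Jtil atTop (nhds Jstar))
    (hKconv : Tendsto K atTop (nhds Kstar))
    (hKtilconv : Tendsto Ktil atTop (nhds Kstar))
    (hspec : spectralRadius ℂ (Jstar.map (Complex.ofReal : ℝ → ℂ)) < 1)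
    (etil ν : ℤ → Ω → EuclideanSpace ℝ (Fin k))
    (w : ℤ → Ω → EuclideanSpace ℝ (Fin n))
    (hetil2 : ∀ t, MemLp (etil t) 2 P)
    (hν2 : ∀ t, MemLp (ν t) 2 P)
    (hw2 : ∀ t, MemLp (w t) 2 P)
    (hetilB : ∃ B : ℝ, ∀ t, ∫ ω, ‖etil t ω‖ ^ 2 ∂P ≤ B)
    (hνB : ∃ B : ℝ, ∀ t, ∫ ω, ‖ν t ω‖ ^ 2 ∂P ≤ B)
    (hwB : ∃ B : ℝ, ∀ t, ∫ ω, ‖w t ω‖ ^ 2 ∂P ≤ B)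
    (d : ℤ → Ω → EuclideanSpace ℝ (Fin k))
    (hdstar : MemLp (d tstar) 2 P)
    (hrec : ∀ᵐ ω ∂P, ∀ t, tstar < t →
      d t ω = mulVecE (J t) (d (t - 1) ω) +
        mulVecE (J t - Jtil t) (etil (t - 1) ω + ν t ω) +
        mulVecE (Ktil t - K t) (w t ω)) :
    Tendsto (fun t : ℤ => ∫ ω, ‖d t ω‖ ^ 2 ∂P) atTop (nhds 0) ∧
    ∀ ε εerr : ℝ, 0 < ε → 0 < εerr → ∃ τ : ℤ, ∀ t, tstar + τ ≤ t →
      1 - ε < (P {ω | ‖d t ω‖ ^ 2 ≤ εerr}).toReal := by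
  obtain ⟨Be, hBe⟩ := hetilB
  obtain ⟨Bν, hBν⟩ := hνB
  obtain ⟨Bw, hBw⟩ := hwB
  set g : ℤ → Ω → EuclideanSpace ℝ (Fin k) := fun t ω =>
    mulVecCLM (J t - Jtil t) (etil (t - 1) ω + ν t ω) + mulVecCLM (Ktil t - K t) (w t ω)
  have hg : ∀ t, MemLp (g t) 2 P := fun t =>
    ((mulVecCLM _).comp_memLp' ((hetil2 _).add (hν2 t))).add ((mulVecCLM _).comp_memLp' (hw2 t))
  have hg0 : Tendsto (fun t => ∫ ω, ‖g t ω‖ ^ 2 ∂P) atTop (𝓝 0) :=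
    tendsto_integral_norm_sq_add (fun t => (mulVecCLM _).comp_memLp' ((hetil2 _).add (hν2 t)))
      (fun t => (mulVecCLM _).comp_memLp' (hw2 t))
      (tendsto_integral_norm_sq_apply (tendsto_mulVecCLM_sub hJconv hJtilconv)
        (fun t => (hetil2 _).add (hν2 t)) (C := 2 * (Be + Bν))
        fun t => (integral_norm_sq_add_le (hetil2 _) (hν2 t)).trans
          (by gcongr; exacts [hBe _, hBν t]))
      (tendsto_integral_norm_sq_apply (tendsto_mulVecCLM_sub hKtilconv hKconv) hw2 hBw)
  have hrec' : ∀ᵐ ω ∂P, ∀ t, tstar < t → d t ω = mulVecCLM (J t) (d (t - 1) ω) + g t ω := by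
    filter_upwards [hrec] with ω hω t ht
    rw [hω t ht, add_assoc]
    simp only [g, mulVecCLM_apply]
  have hd := memLp_of_ae_recursion hdstar hg hrec'
  have hms := tendsto_integral_norm_sq_of_ae_recursion
    (tendsto_pow_mulVecCLM_of_spectralRadius_lt_one hspec)
    ((mulVecCLM.continuous.tendsto Jstar).comp hJconv) hd hg hg0 hrec'
  refine ⟨hms, fun ε εerr hε hεerr => ?_⟩
  obtain ⟨T, hT⟩ := eventually_atTop.1 <| eventually_one_sub_lt_measure_le_of_tendsto_integral
    (fun t ω => sq_nonneg ‖d t ω‖)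
    (eventually_atTop.2 ⟨tstar, fun t ht => (hd t ht).integrable_norm_pow two_ne_zero⟩)
    hms hεerr hε
  exact ⟨T - tstar, fun t ht => hT t (by omega)⟩

/-- core of the KF-CS convergence lemma. If the deterministic gain
and transition matrices of two Kalman filters converge to common limits, the limit
transition matrix `J_*` has spectral radius `< 1`, the driving random processes
have uniformly bounded second moments, and `d_t` satisfies the stated recursion,
then `d_t → 0` in mean square, and consequently in probability. -/
theorem kfcs_converges_to_genie_kf {Ω : Type*} [MeasurableSpace Ω]
    (P : Measure Ω) [IsProbabilityMeasure P]
    (k n : ℕ) (hk : 0 < k) (hn : 0 < n) (tstar : ℤ)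
    (J Jtil : ℤ → Matrix (Fin k) (Fin k) ℝ)
    (K Ktil : ℤ → Matrix (Fin k) (Fin n) ℝ)
    (Jstar : Matrix (Fin k) (Fin k) ℝ) (Kstar : Matrix (Fin k) (Fin n) ℝ)
    (hJconv : Tendsto J atTop (nhds Jstar))
    (hJtilconv : Tendsto Jtil atTop (nhds Jstar))
    (hKconv : Tendsto K atTop (nhds Kstar))
    (hKtilconv : Tendsto Ktil atTop (nhds Kstar))
    (hspec : spectralRadius ℂ (Jstar.map (Complex.ofReal : ℝ → ℂ)) < 1)
    (etil ν : ℤ → Ω → EuclideanSpace ℝ (Fin k))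
    (w : ℤ → Ω → EuclideanSpace ℝ (Fin n))
    (hetil2 : ∀ t, MemLp (etil t) 2 P)
    (hν2 : ∀ t, MemLp (ν t) 2 P)
    (hw2 : ∀ t, MemLp (w t) 2 P)
    (hetilB : ∃ B : ℝ, ∀ t, ∫ ω, ‖etil t ω‖ ^ 2 ∂P ≤ B)
    (hνB : ∃ B : ℝ, ∀ t, ∫ ω, ‖ν t ω‖ ^ 2 ∂P ≤ B)
    (hwB : ∃ B : ℝ, ∀ t, ∫ ω, ‖w t ω‖ ^ 2 ∂P ≤ B)
    (d : ℤ → Ω → EuclideanSpace ℝ (Fin k))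
    (hdstar : MemLp (d tstar) 2 P)
    (hrec : ∀ᵐ ω ∂P, ∀ t, tstar < t →
      d t ω = mulVecE (J t) (d (t - 1) ω) +
        mulVecE (J t - Jtil t) (etil (t - 1) ω + ν t ω) +
        mulVecE (Ktil t - K t) (w t ω)) :
    Tendsto (fun t : ℤ => ∫ ω, ‖d t ω‖ ^ 2 ∂P) atTop (nhds 0) ∧
    ∀ ε εerr : ℝ, 0 < ε → 0 < εerr → ∃ τ : ℤ, ∀ t, tstar + τ ≤ t →
      1 - ε < (P {ω | ‖d t ω‖ ^ 2 ≤ εerr}).toReal :=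
  kfcs_converges_to_genie_kf_general P k n tstar J Jtil K Ktil Jstar Kstar hJconv hJtilconv hKconv
    hKtilconv hspec etil ν w hetil2 hν2 hw2 hetilB hνB hwB d hdstar hrec
end
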